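/- arXiv:1706.02546 — 2 statements merged into one kernel-verified Lean document; each statement's English description precedes it below -/
import Mathlib

section
/- Let $G$ be a group, $\mathcal{A}$ a commutative unital ring, $\mathcal{F}$ the ring of all functions $G \to \mathcal{A}$ with the $G$-action $\beta_x(f)(t) = f(x^{-1}t)$, and $\widetilde{w} : G^n \to \mathcal{U}(\mathcal{A})$ any function. Define $u : G^n \to \mathcal{U}(\mathcal{F})$ by $u(x_1,\dots,x_n)(t) = \widetilde{w}(t^{-1},x_1,\dots,x_{n-1})^{(-1)^n} \widetilde{w}(t^{-1}x_1, x_2,\dots,x_n) \prod_{i=1}^{n-1} \widetilde{w}(t^{-1},x_1,\dots,x_i x_{i+1},\dots,x_n)^{(-1)^i}$. Then $u$ is a (classical) $n$-cocycle of $G$ with values in the $G$-module $\mathcal{U}(\mathcal{F})$, i.e., $\beta_{x_1}(u(x_2,\dots,x_{n+1})) \prod_{i=1}^n u(x_1,\dots,x_i x_{i+1},\dots,x_{n+1})^{(-1)^i} u(x_1,\dots,x_n)^{(-1)^{n+1}} = 1_{\mathcal{F}}$ for all $x_1,\dots,x_{n+1} \in G$. -/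
/-!
Let `G` act on `F = (G → 𝒰(𝒜))` by translation and put `h(a)(t) = w̃(t⁻¹, a)` for `a ∈ Gⁿ⁻¹`.
Evaluating the inhomogeneous coboundary `δh` at `(x₁,…,xₙ)` and `t` produces exactly the faces of
`(t⁻¹, x₁,…,xₙ)` other than `(x₁,…,xₙ)` itself, with the signs of `u`; so `u = δh` and the
cocycle identity is `δδh = 1`. The latter holds for any `G`-module, because the coface maps obey
the cosimplicial identities and the terms of `δδ` therefore cancel in pairs.
-/

/-- The tuple obtained from `(x₁,…,x_{n+1})` by multiplying the entries in positions
`i, i+1` (0-indexed). -/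
def dface {G : Type*} [Group G] {n : ℕ} (i : Fin n) (x : Fin (n + 1) → G) : Fin n → G :=
  fun j => if (j : ℕ) < (i : ℕ) then x j.castSucc
    else if j = i then x i.castSucc * x i.succ
    else x j.succ

theorem zpow_neg_one_pow_mul_zpow_neg_one_pow_succ {H : Type*} [Group H] (a : H) (e : ℕ) :
    a ^ ((-1 : ℤ) ^ e) * a ^ ((-1 : ℤ) ^ (e + 1)) = 1 := by
  rw [pow_succ, mul_neg_one, zpow_neg, mul_inv_cancel]

theorem Fin.init_cons {α : Type*} {m : ℕ} (c : α) (x : Fin (m + 1) → α) :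
    Fin.init (Fin.cons c x : Fin (m + 2) → α) = Fin.cons c (Fin.init x) := by
  funext j
  cases j using Fin.cases <;> rfl

section DfaceCons

variable {G : Type*} [Group G] {m : ℕ}

theorem dface_zero_cons (c : G) (x : Fin (m + 1) → G) :
    dface 0 (Fin.cons c x : Fin (m + 2) → G) = Fin.cons (c * x 0) (Fin.tail x) := by
  funext j
  cases j using Fin.cases with
  | zero => simp [dface]
  | succ k => simp [dface, Fin.succ_ne_zero, Fin.tail]

theorem dface_succ_cons (c : G) (i : Fin m) (x : Fin (m + 1) → G) :
    dface i.succ (Fin.cons c x : Fin (m + 2) → G) = Fin.cons c (dface i x) := by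
  funext j
  cases j using Fin.cases with
  | zero => simp [dface]
  | succ k =>
    simp only [dface, Fin.cons_succ, Fin.val_succ, Fin.succ_inj, Nat.add_lt_add_iff_right,
      ← Fin.succ_castSucc]

end DfaceCons

namespace InhomogeneousCochain

variable {G M : Type*}

/-- `face 0` drops the first entry, `face (m + 1)` drops the last one, and `face k` for
`0 < k ≤ m` multiplies the entries `k - 1` and `k`. -/
def face [Mul G] {m : ℕ} (k : ℕ) (y : Fin (m + 1) → G) : Fin m → G := fun j =>
  if (j : ℕ) + 1 < k then y j.castSucc
  else if (j : ℕ) + 1 = k then y j.castSucc * y j.succ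
  else y j.succ

theorem face_zero [Mul G] {m : ℕ} (y : Fin (m + 1) → G) : face 0 y = Fin.tail y := by
  funext j
  simp [face, Fin.tail]

theorem face_last [Mul G] {m : ℕ} (y : Fin (m + 1) → G) : face (m + 1) y = Fin.init y := by
  funext j
  simp [face, Fin.init, j.isLt]

theorem face_succ [Group G] {m : ℕ} (i : Fin m) (y : Fin (m + 1) → G) :
    face ((i : ℕ) + 1) y = dface i y := by
  funext j
  simp only [face, dface, Nat.add_lt_add_iff_right, Nat.add_right_cancel_iff, Fin.val_inj]
  split_ifs with _ h <;> first | rfl | (subst h; rfl)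

theorem face_face [Semigroup G] {m a b : ℕ} (hab : a ≤ b) (z : Fin (m + 2) → G) :
    face a (face (b + 1) z) = face b (face a z) := by
  funext j
  simp only [face, Fin.val_castSucc, Fin.val_succ]
  split_ifs <;> first | rfl | omega | exact mul_assoc _ _ _ | exact (mul_assoc _ _ _).symm

section Coboundary

variable [Monoid G] [CommGroup M] [MulDistribMulAction G M]

def coface {m : ℕ} (k : ℕ) : ((Fin m → G) → M) →* ((Fin (m + 1) → G) → M) where
  toFun f y := if k = 0 then y 0 • f (face 0 y) else f (face k y)
  map_one' := by
    funext y
    split_ifs <;> simp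
  map_mul' f g := by
    funext y
    split_ifs <;> simp [smul_mul']

theorem coface_coface {m a b : ℕ} (hab : a ≤ b) (f : (Fin m → G) → M) :
    coface (b + 1) (coface a f) = coface a (coface b f) := by
  funext z
  simp only [coface, MonoidHom.coe_mk, OneHom.coe_mk, Nat.add_one_ne_zero, if_false]
  rcases Nat.eq_zero_or_pos a with rfl | ha
  · simp only [if_true, face_face hab]
    rcases Nat.eq_zero_or_pos b with rfl | hb
    · simp [face, mul_smul]
    · simp [face, hb, hb.ne']
  · rw [if_neg ha.ne', if_neg ha.ne', if_neg (by omega), face_face hab]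

def d {m : ℕ} (f : (Fin m → G) → M) : (Fin (m + 1) → G) → M :=
  ∏ k ∈ Finset.range (m + 2), coface k f ^ ((-1 : ℤ) ^ k)

theorem d_d {m : ℕ} (f : (Fin m → G) → M) : d (d f) = 1 := by
  have expand : d (d f) = ∏ p ∈ Finset.range (m + 3) ×ˢ Finset.range (m + 2),
      coface p.1 (coface p.2 f) ^ ((-1 : ℤ) ^ (p.1 + p.2)) := by
    rw [d, Finset.prod_product]
    refine Finset.prod_congr rfl fun k _ => ?_
    rw [d, map_prod, ← Finset.prod_zpow]
    refine Finset.prod_congr rfl fun i _ => ?_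
    rw [map_zpow, ← zpow_mul, ← pow_add, Nat.add_comm i k]
  rw [expand]
  -- `coface_coface` pairs the term `(k, i)`, `i < k`, with the term `(i, k - 1)` of opposite sign
  refine Finset.prod_involution
    (fun p _ => if p.2 < p.1 then (p.2, p.1 - 1) else (p.2 + 1, p.1)) ?_ ?_ ?_ ?_
  · rintro ⟨k, i⟩ -
    dsimp only
    split_ifs with h
    · obtain ⟨k, rfl⟩ := Nat.exists_eq_add_of_lt h
      rw [Nat.add_sub_cancel, coface_coface (Nat.le_add_right i k), mul_comm,
        show i + k + 1 + i = i + (i + k) + 1 by omega]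
      exact zpow_neg_one_pow_mul_zpow_neg_one_pow_succ _ _
    · rw [coface_coface (by omega : k ≤ i), show i + 1 + k = k + i + 1 by omega]
      exact zpow_neg_one_pow_mul_zpow_neg_one_pow_succ _ _
  · rintro ⟨k, i⟩ - -
    split_ifs <;> simp only [ne_eq, Prod.ext_iff] <;> omega
  · rintro ⟨k, i⟩ hp
    simp only [Finset.mem_product, Finset.mem_range] at hp ⊢
    split_ifs <;> omega
  · rintro ⟨k, i⟩ -
    by_cases h : i < k
    · simp [h, show ¬k - 1 < i by omega]
      omega
    · simp [h]

end Coboundary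

theorem d_apply [Group G] [CommGroup M] [MulDistribMulAction G M] {m : ℕ}
    (f : (Fin m → G) → M) (y : Fin (m + 1) → G) :
    d f y = y 0 • f (Fin.tail y) * (∏ i : Fin m, f (dface i y) ^ ((-1 : ℤ) ^ ((i : ℕ) + 1))) *
      f (Fin.init y) ^ ((-1 : ℤ) ^ (m + 1)) := by
  have middle : ∏ i : Fin m, f (dface i y) ^ ((-1 : ℤ) ^ ((i : ℕ) + 1)) =
      ∏ k ∈ Finset.range m, f (face (k + 1) y) ^ ((-1 : ℤ) ^ (k + 1)) := by
    rw [← Fin.prod_univ_eq_prod_range]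
    simp only [face_succ]
  rw [middle, d, Finset.prod_apply, Finset.prod_range_succ, Finset.prod_range_succ']
  simp [coface, face_zero, face_last, mul_comm]

section Translation

attribute [local instance] arrowMulDistribMulAction

variable [Group G]

theorem arrow_smul_apply [Monoid M] (g : G) (F : G → M) (t : G) : (g • F) t = F (g⁻¹ * t) :=
  rfl

theorem d_cons_inv_apply [CommGroup M] {m : ℕ} (w : (Fin (m + 1) → G) → M)
    (x : Fin (m + 1) → G) (t : G) :
    let y : Fin (m + 2) → G := Fin.cons t⁻¹ x
    d (fun a s => w (Fin.cons s⁻¹ a)) x t =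
      w (Fin.init y) ^ ((-1 : ℤ) ^ (m + 1)) * w (dface 0 y) *
        ∏ i : Fin m, w (dface i.succ y) ^ ((-1 : ℤ) ^ ((i : ℕ) + 1)) := by
  simp only [d_apply, Pi.mul_apply, Finset.prod_apply, Pi.pow_apply, arrow_smul_apply,
    mul_inv_rev, inv_inv, Fin.init_cons, dface_zero_cons, dface_succ_cons]
  ac_rfl

end Translation

end InhomogeneousCochain

/-- Let `F = F(G, A)` be the ring of functions `G → A` with the translation `G`-action
`β_x(f)(t) = f(x⁻¹ t)`, and let `w̃ : G^{n+1} → U(A)` be any function (here the paper's `n`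
is `n + 1 ≥ 1`).  The function `u : G^{n+1} → U(F)` defined by
`u(x₁,…,x_{n+1})(t) = w̃(t⁻¹,x₁,…,xₙ)^{(-1)^{n+1}} · w̃(t⁻¹x₁,x₂,…,x_{n+1}) ·
∏_{i=1}^{n} w̃(t⁻¹,x₁,…,xᵢxᵢ₊₁,…,x_{n+1})^{(-1)ᶦ}`
is a classical `(n+1)`-cocycle of `G` with values in `U(F)`. -/
theorem stmt6 {G A : Type*} [Group G] [CommRing A] (n : ℕ)
    (wt : (Fin (n + 1) → G) → Aˣ) :
    let u : (Fin (n + 1) → G) → G → Aˣ := fun x t =>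
      let y : Fin (n + 2) → G := Fin.cons t⁻¹ x
      (wt (Fin.init y)) ^ ((-1 : ℤ) ^ (n + 1)) *
      wt (dface 0 y) *
      ∏ i : Fin n, (wt (dface i.succ y)) ^ ((-1 : ℤ) ^ ((i : ℕ) + 1))
    ∀ (x : Fin (n + 2) → G) (t : G),
      u (Fin.tail x) ((x 0)⁻¹ * t) *
      (∏ i : Fin (n + 1), (u (dface i x) t) ^ ((-1 : ℤ) ^ ((i : ℕ) + 1))) *
      (u (Fin.init x) t) ^ ((-1 : ℤ) ^ (n + 2)) = 1 := by
  intro u x t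
  let _ : MulDistribMulAction G (G → Aˣ) := arrowMulDistribMulAction
  let h : (Fin n → G) → G → Aˣ := fun a s => wt (Fin.cons s⁻¹ a)
  have hu : ∀ a s, u a s = InhomogeneousCochain.d h a s := fun a s =>
    (InhomogeneousCochain.d_cons_inv_apply wt a s).symm
  have hdd := congrFun (congrFun (InhomogeneousCochain.d_d h) x) t
  rw [InhomogeneousCochain.d_apply] at hdd
  simpa only [← hu, Pi.mul_apply, Finset.prod_apply, Pi.pow_apply, Pi.one_apply,
    InhomogeneousCochain.arrow_smul_apply] using hdd
end

section
/- With $\bar{x}$ denoting the representative in the left transversal $\Lambda'$ of $H$ in $G$ with $x \in \bar{x}H$, and $\Lambda \subseteq \Lambda'$ as above, for any $x \in G$ and $g \in \Lambda'$: (1) $g \in \Lambda$ if and only if $\mathcal{A}_1 \subseteq \mathcal{D}_{g^{-1}}$; (2) if $g \in \Lambda$, then $\overline{xg} \in \Lambda$ if and only if $\mathcal{A}_g \subseteq \mathcal{D}_{x^{-1}}$, and in that case $\alpha_x(\mathcal{A}_g) = \mathcal{A}_{\overline{xg}}$. -/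
variable {G : Type*} [Group G]

/-- A unital partial action of `G` on a commutative unital ring `A`: each domain
`D g = (e g)·A` is generated by a central idempotent `e g`, `D 1 = A`, and the partial
isomorphisms `α g : D g⁻¹ → D g` (restrictions of the globally defined maps `act g`)
satisfy the partial action axioms. -/
structure UPA (G A : Type*) [Group G] [CommRing A] where
  e : G → A
  idem : ∀ g, e g * e g = e g
  e_one : e 1 = 1
  act : G → A → A
  act_one : ∀ a, act 1 a = a
  act_mem : ∀ g a, e g⁻¹ * a = a → e g * act g a = act g a
  act_add : ∀ g a b, e g⁻¹ * a = a → e g⁻¹ * b = b → act g (a + b) = act g a + act g b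
  act_mul : ∀ g a b, e g⁻¹ * a = a → e g⁻¹ * b = b → act g (a * b) = act g a * act g b
  act_e : ∀ g h, act g (e g⁻¹ * e h) = e g * e (g * h)
  act_inv : ∀ g a, e g⁻¹ * a = a → act g⁻¹ (act g a) = a
  act_comp : ∀ g h a, e h⁻¹ * e (h⁻¹ * g⁻¹) * a = a → act g (act h a) = act (g * h) a

variable {Λ : Type*} [DecidableEq Λ] {R : Λ → Type*} [∀ l, CommRing (R l)]

/-- The identity of the block `A_l` viewed as an (indecomposable) idempotent of the
product ring `A = ∏ l, R l`. -/
def blk (l : Λ) : ∀ l, R l := Pi.single l 1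


private lemma UPA.comp' {A : Type*} [CommRing A] (S : UPA G A) (g h : G) (a : A)
    (ha : S.e h⁻¹ * a = a) (hb : S.e g⁻¹ * S.act h a = S.act h a) :
    S.e (g * h)⁻¹ * a = a ∧ S.act g (S.act h a) = S.act (g * h) a := by
  have hb' : S.e h * S.act h a = S.act h a := S.act_mem h a ha
  have hdom1 : S.e h⁻¹⁻¹ * (S.e h * S.e g⁻¹) = S.e h * S.e g⁻¹ := by
    rw [inv_inv, ← mul_assoc, S.idem]
  have hdom2 : S.e h⁻¹⁻¹ * S.act h a = S.act h a := by rw [inv_inv]; exact hb'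
  have hmul := S.act_mul h⁻¹ (S.e h * S.e g⁻¹) (S.act h a) hdom1 hdom2
  have he : S.act h⁻¹ (S.e h * S.e g⁻¹) = S.e h⁻¹ * S.e (h⁻¹ * g⁻¹) := by
    have := S.act_e h⁻¹ g⁻¹
    rwa [inv_inv] at this
  have hinv : S.act h⁻¹ (S.act h a) = a := S.act_inv h a ha
  have habs : S.e h * S.e g⁻¹ * S.act h a = S.act h a := by
    rw [mul_comm (S.e h) (S.e g⁻¹), mul_assoc, hb', hb]
  have key : S.e h⁻¹ * S.e (h⁻¹ * g⁻¹) * a = a := by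
    rw [← he, ← hinv, ← hmul, habs]
  have hcomp := S.act_comp g h a key
  refine ⟨?_, hcomp⟩
  rw [mul_inv_rev]
  calc S.e (h⁻¹ * g⁻¹) * a
      = S.e (h⁻¹ * g⁻¹) * (S.e h⁻¹ * S.e (h⁻¹ * g⁻¹) * a) := by rw [key]
    _ = S.e h⁻¹ * (S.e (h⁻¹ * g⁻¹) * S.e (h⁻¹ * g⁻¹)) * a := by ring
    _ = S.e h⁻¹ * S.e (h⁻¹ * g⁻¹) * a := by rw [S.idem]
    _ = a := key

private lemma UPA.dom_shift {A : Type*} [CommRing A] (S : UPA G A) (g h : G) (a : A)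
    (ha : S.e h⁻¹ * a = a) (hgh : S.e (g * h)⁻¹ * a = a) :
    S.e g⁻¹ * S.act h a = S.act h a := by
  have h1 : S.e (h⁻¹ * g⁻¹) * a = a := by rwa [← mul_inv_rev]
  have he : S.act h (S.e h⁻¹ * S.e (h⁻¹ * g⁻¹)) = S.e h * S.e g⁻¹ := by
    have := S.act_e h (h⁻¹ * g⁻¹)
    rw [show h * (h⁻¹ * g⁻¹) = g⁻¹ by group] at this
    exact this
  have hdom1 : S.e h⁻¹ * (S.e h⁻¹ * S.e (h⁻¹ * g⁻¹)) = S.e h⁻¹ * S.e (h⁻¹ * g⁻¹) := by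
    rw [← mul_assoc, S.idem]
  have ha' : S.act h ((S.e h⁻¹ * S.e (h⁻¹ * g⁻¹)) * a)
      = (S.e h * S.e g⁻¹) * S.act h a := by
    rw [S.act_mul h _ a hdom1 ha, he]
  have hfix : (S.e h⁻¹ * S.e (h⁻¹ * g⁻¹)) * a = a := by rw [mul_assoc, h1, ha]
  have hkey : S.act h a = S.e h * S.e g⁻¹ * S.act h a := by rw [← ha', hfix]
  calc S.e g⁻¹ * S.act h a
      = S.e g⁻¹ * (S.e h * S.e g⁻¹ * S.act h a) := by rw [← hkey]
    _ = S.e h * (S.e g⁻¹ * S.e g⁻¹) * S.act h a := by ring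
    _ = S.e h * S.e g⁻¹ * S.act h a := by rw [S.idem]
    _ = S.act h a := hkey.symm

/-- (Lemma 5.1 of [DES2].)  Setup: `A = ∏_{λ ∈ Λ} A_λ` is a product of indecomposable
nontrivial commutative unital rings, `S` a transitive unital partial action of `G` on `A`,
`l0` a base block, `H = {x | A_{l0} ⊆ D_{x⁻¹} and α_x(A_{l0}) = A_{l0}}`, `bar` selects
representatives of the left transversal `Λ' = range bar` of `H` containing `1`, and
`ι : Λ ↪ Λ' ⊆ G` identifies each block index `λ` with the `g ∈ Λ'` such that
`A_{l0} ⊆ D_{g⁻¹}` and `α_g(A_{l0}) = A_λ`, with `ι l0 = 1`.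
Then for `x ∈ G` and `g ∈ Λ'`:
(1) `g ∈ Λ` iff `A_{l0} ⊆ D_{g⁻¹}`;
(2) if `g = ι λ ∈ Λ`, then `bar (x g) ∈ Λ` iff `A_λ ⊆ D_{x⁻¹}`, and in that situation
`α_x(A_λ) = A_{bar (x g)}`.
(Containment of a block in a unital ideal is expressed by absorption of its idempotent.) -/
theorem stmt12 [∀ l, Nontrivial (R l)]
    (hind : ∀ (l : Λ) (y : R l), y * y = y → y = 0 ∨ y = 1)
    (S : UPA G (∀ l, R l)) (l0 : Λ)
    (htrans : ∀ l m : Λ, ∃ x : G, S.e x⁻¹ * blk l = blk l ∧ S.act x (blk l) = blk m)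
    (hblocks : ∀ (x : G) (l : Λ), S.e x⁻¹ * blk l = blk l →
      ∃ m : Λ, S.act x (blk l) = blk m)
    (bar : G → G)
    (hbar_mem : ∀ x, S.e (x⁻¹ * bar x)⁻¹ * blk l0 = blk l0 ∧
      S.act (x⁻¹ * bar x) (blk l0) = blk l0)
    (hbar_eq : ∀ x y, (S.e (x⁻¹ * y)⁻¹ * blk l0 = blk l0 ∧
      S.act (x⁻¹ * y) (blk l0) = blk l0) → bar x = bar y)
    (hbar_one : bar 1 = 1)
    (ι : Λ → G) (hι_inj : Function.Injective ι)
    (hι_bar : ∀ l, bar (ι l) = ι l)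
    (hι_dom : ∀ l, S.e (ι l)⁻¹ * blk l0 = blk l0)
    (hι_act : ∀ l, S.act (ι l) (blk l0) = blk l)
    (hι₀ : ι l0 = 1)
    (x g : G) (hg : bar g = g) :
    (g ∈ Set.range ι ↔ S.e g⁻¹ * blk l0 = blk l0) ∧
    (∀ l : Λ, ι l = g →
      (bar (x * g) ∈ Set.range ι ↔ S.e x⁻¹ * blk l = blk l) ∧
      (S.e x⁻¹ * blk l = blk l →
        ∃ m : Λ, ι m = bar (x * g) ∧ S.act x (blk l) = blk m)) := by
  
  have key : ∀ k : G, S.e k⁻¹ * blk l0 = blk l0 →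
      ∃ m : Λ, ι m = bar k ∧ S.act k (blk (R := R) l0) = blk m := by
    intro k hk
    obtain ⟨m, hm⟩ := hblocks k l0 hk
    have hb : S.e ((ι m)⁻¹)⁻¹ * S.act k (blk l0) = S.act k (blk l0) := by
      rw [inv_inv, hm, ← hι_act m]
      exact S.act_mem (ι m) _ (hι_dom m)
    obtain ⟨hd2, hc2⟩ := S.comp' (ι m)⁻¹ k (blk l0) hk hb
    have hact : S.act ((ι m)⁻¹ * k) (blk (R := R) l0) = blk l0 := by
      rw [← hc2, hm, ← hι_act m, S.act_inv (ι m) _ (hι_dom m)]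
    have hbar := hbar_eq (ι m) k ⟨hd2, hact⟩
    exact ⟨m, by rw [← hbar, hι_bar], hm⟩
  constructor
  · constructor
    · rintro ⟨m, rfl⟩; exact hι_dom m
    · intro hd
      obtain ⟨m, hmeq, -⟩ := key g hd
      exact ⟨m, by rw [hmeq, hg]⟩
  · intro l hl
    have hdg : S.e g⁻¹ * blk l0 = blk (R := R) l0 := by rw [← hl]; exact hι_dom l
    have hag : S.act g (blk (R := R) l0) = blk l := by rw [← hl]; exact hι_act l
    have fwd : S.e x⁻¹ * blk l = blk l →
        ∃ m : Λ, ι m = bar (x * g) ∧ S.act x (blk (R := R) l) = blk m := by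
      intro hdx
      have hb : S.e x⁻¹ * S.act g (blk l0) = S.act g (blk (R := R) l0) := by
        rw [hag]; exact hdx
      obtain ⟨hd2, hc2⟩ := S.comp' x g (blk l0) hdg hb
      obtain ⟨m, hmeq, hmact⟩ := key (x * g) hd2
      exact ⟨m, hmeq, by rw [← hag, hc2, hmact]⟩
    refine ⟨⟨?_, fun hdx => (fwd hdx).imp fun m hm => hm.1⟩, fwd⟩
    rintro ⟨m, hm⟩
    obtain ⟨ht1, ht2⟩ := hbar_mem (x * g)
    rw [← hm] at ht1 ht2
    have ht3 : S.e ((x * g)⁻¹ * ι m) * blk l0 = blk (R := R) l0 := by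
      have := S.act_mem ((x * g)⁻¹ * ι m) _ ht1
      rwa [ht2] at this
    have ht4 : S.act ((x * g)⁻¹ * ι m)⁻¹ (blk (R := R) l0) = blk l0 := by
      have := S.act_inv ((x * g)⁻¹ * ι m) _ ht1
      rwa [ht2] at this
    have ha : S.e (((x * g)⁻¹ * ι m)⁻¹)⁻¹ * blk l0 = blk (R := R) l0 := by
      rwa [inv_inv]
    have hb : S.e (ι m)⁻¹ * S.act ((x * g)⁻¹ * ι m)⁻¹ (blk l0)
        = S.act ((x * g)⁻¹ * ι m)⁻¹ (blk (R := R) l0) := by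
      rw [ht4]; exact hι_dom m
    obtain ⟨hd2, -⟩ := S.comp' (ι m) ((x * g)⁻¹ * ι m)⁻¹ (blk l0) ha hb
    rw [show ι m * ((x * g)⁻¹ * ι m)⁻¹ = x * g by group] at hd2
    have := S.dom_shift x g (blk l0) hdg hd2
    rwa [hag] at this
end
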